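/- arXiv:2604.21049 — 2 statements merged into one kernel-verified Lean document; each statement's English description precedes it below -/
import Mathlib

section
/- Let μ : 𝒜 → L^0(m) be an L^0-valued measure. Define |μ|(A) to be the supremum in the complete lattice of extended L^0 functions of ∑_{n=1}^∞ |μ(A_n)| over all countable measurable partitions (A_n) of A. If |μ|(Ω) ∈ L^0_+(m) (i.e. μ has bounded variation), then |μ| : 𝒜 → L^0_+(m) is a non-negative L^0-valued measure. -/
open Filter Set Topology Function
open MeasureTheory (Measure IsProbabilityMeasure)

noncomputable section

namespace RNMPaper

variable {X : Type*} [MeasurableSpace X]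

/-- The canonical distance on `L⁰(m)`, `d(f,g) = ∫ |f-g| ∧ 1 dm`. -/
def dL0 (m : Measure X) (f g : X →ₘ[m] ℝ) : ℝ := ∫ x, min |f x - g x| 1 ∂m

/-- Convergence of a sequence in `L⁰(m)` (i.e. convergence in measure). -/
def TendstoL0 (m : Measure X) (f : ℕ → X →ₘ[m] ℝ) (g : X →ₘ[m] ℝ) : Prop :=
  Tendsto (fun n => dL0 m (f n) g) atTop (𝓝 0)

/-- `S` is the sum of the (nonnegative) sequence `f` in `L⁰(m)`: the least upper bound
of the partial sums. -/
def HasL0Sum (m : Measure X) (f : ℕ → X →ₘ[m] ℝ) (S : X →ₘ[m] ℝ) : Prop :=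
  IsLUB (Set.range fun n => ∑ i ∈ Finset.range n, f i) S

/-- A random normed module with base probability space `(X, Σ, m)`: an `L⁰(m)`-module
with an `L⁰`-norm. -/
structure RNMod (m : Measure X) where
  M : Type*
  [grp : AddCommGroup M]
  smul : (X →ₘ[m] ℝ) → M → M
  nrm : M → X →ₘ[m] ℝ
  smul_add : ∀ f v w, smul f (v + w) = smul f v + smul f w
  add_smul : ∀ f g v, smul (f + g) v = smul f v + smul g v
  one_smul : ∀ v, smul 1 v = v
  mul_smul : ∀ f g v, smul (f * g) v = smul f (smul g v)
  nrm_nonneg : ∀ v, 0 ≤ nrm v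
  nrm_eq_zero : ∀ v, nrm v = 0 ↔ v = 0
  nrm_add_le : ∀ v w, nrm (v + w) ≤ nrm v + nrm w
  nrm_smul : ∀ f v, nrm (smul f v) = |f| * nrm v

attribute [instance] RNMod.grp

/-- The distance on a random normed module. -/
def RNMod.dist {m : Measure X} (R : RNMod m) (v w : R.M) : ℝ := dL0 m (R.nrm (v - w)) 0

/-- Completeness of a random normed module: every Cauchy sequence converges. -/
def RNMod.Complete {m : Measure X} (R : RNMod m) : Prop :=
  ∀ v : ℕ → R.M, (∀ ε > (0:ℝ), ∃ N, ∀ p ≥ N, ∀ q ≥ N, R.dist (v p) (v q) < ε) →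
    ∃ w : R.M, Tendsto (fun n => R.dist (v n) w) atTop (𝓝 0)

variable {Ω : Type*}

/-- An `L⁰(m)`-valued measure on the measurable space `Ω` (the values on non-measurable
sets are irrelevant): `μ ∅ = 0` and, for every sequence of pairwise disjoint measurable
sets, the norms `|μ (A n)|` are summable (partial sums order bounded) and the finite
partial sums of `μ (A n)` converge (as a net over finite subsets, in the metric of
`L⁰(m)`) to `μ (⋃ n, A n)`. -/
structure L0Measure (m : Measure X) (Ω : Type*) [MeasurableSpace Ω] where
  toFun : Set Ω → X →ₘ[m] ℝ
  empty' : toFun ∅ = 0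
  summable' : ∀ A : ℕ → Set Ω, (∀ n, MeasurableSet (A n)) → Pairwise (Disjoint on A) →
    BddAbove (Set.range fun n => ∑ i ∈ Finset.range n, |toFun (A i)|)
  additive' : ∀ A : ℕ → Set Ω, (∀ n, MeasurableSet (A n)) → Pairwise (Disjoint on A) →
    Tendsto (fun F : Finset ℕ => dL0 m (∑ i ∈ F, toFun (A i)) (toFun (⋃ n, A n)))
      atTop (𝓝 0)

/-- The collection of all sums `∑ₙ |μ (B n)|` over countable measurable partitions
`(B n)` of `A` (those sums that exist in `L⁰(m)`, as least upper bounds of partial sums). -/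
def partitionSums (m : Measure X) [MeasurableSpace Ω] (μ : Set Ω → X →ₘ[m] ℝ) (A : Set Ω) :
    Set (X →ₘ[m] ℝ) :=
  {g | ∃ B : ℕ → Set Ω, (∀ n, MeasurableSet (B n)) ∧ Pairwise (Disjoint on B) ∧
    (⋃ n, B n) = A ∧ HasL0Sum m (fun n => |μ (B n)|) g}

/-- `t` is the total variation `|μ|(A)` of `μ` on `A`: `t` dominates all partial sums over
all countable measurable partitions of `A` (so each partition sum exists in `L⁰(m)` and is
`≤ t`), and `t` is the least upper bound of the set of partition sums. -/
def HasTV (m : Measure X) [MeasurableSpace Ω] (μ : Set Ω → X →ₘ[m] ℝ) (A : Set Ω)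
    (t : X →ₘ[m] ℝ) : Prop :=
  (∀ B : ℕ → Set Ω, (∀ n, MeasurableSet (B n)) → Pairwise (Disjoint on B) →
    (⋃ n, B n) = A → ∀ n, ∑ i ∈ Finset.range n, |μ (B i)| ≤ t) ∧
  IsLUB (partitionSums m μ A) t

/-- An `L⁰(m)`-valued measure of bounded variation, bundled together with its total
variation `L⁰`-valued measure `tv = |μ|`. -/
structure BVMeasure (m : Measure X) (Ω : Type*) [MeasurableSpace Ω] extends L0Measure m Ω where
  tv : Set Ω → X →ₘ[m] ℝ
  htv : ∀ A, MeasurableSet A → HasTV m toFun A (tv A)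


section AuxLemmas

open MeasureTheory

instance (m : Measure X) : IsOrderedAddMonoid (X →ₘ[m] ℝ) :=
  { add_le_add_left := by
      intro a b hab c
      rw [← AEEqFun.coeFn_le] at hab ⊢
      filter_upwards [hab, AEEqFun.coeFn_add a c, AEEqFun.coeFn_add b c] with x h1 h2 h3
      simp only [h2, h3, Pi.add_apply]
      linarith }

variable {m : Measure X}

lemma abs_nonneg0 (f : X →ₘ[m] ℝ) : 0 ≤ |f| := by
  rw [← AEEqFun.coeFn_le]
  filter_upwards [AEEqFun.coeFn_abs f, AEEqFun.coeFn_zero (β := ℝ) (μ := m)] with x h1 h2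
  rw [h1, h2]; exact abs_nonneg _

lemma abs_add0 (f g : X →ₘ[m] ℝ) : |f + g| ≤ |f| + |g| := by
  rw [← AEEqFun.coeFn_le]
  filter_upwards [AEEqFun.coeFn_abs (f + g), AEEqFun.coeFn_add f g,
    AEEqFun.coeFn_add |f| |g|, AEEqFun.coeFn_abs f, AEEqFun.coeFn_abs g] with x h1 h2 h3 h4 h5
  rw [h1, h2, h3]
  simp only [Pi.add_apply, h4, h5]
  exact abs_add_le _ _

lemma abs_of_nonneg0 {f : X →ₘ[m] ℝ} (hf : 0 ≤ f) : |f| = f := by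
  rw [← AEEqFun.coeFn_le] at hf
  apply AEEqFun.ext
  filter_upwards [AEEqFun.coeFn_abs f, hf, AEEqFun.coeFn_zero (β := ℝ) (μ := m)] with x h1 h2 h3
  rw [h1, abs_of_nonneg]; rw [h3] at h2; exact h2

lemma coeFn_sum {ι : Type*} (s : Finset ι) (f : ι → X →ₘ[m] ℝ) :
    ⇑(∑ i ∈ s, f i) =ᵐ[m] fun x => ∑ i ∈ s, f i x := by
  classical
  induction s using Finset.induction with
  | empty => simp only [Finset.sum_empty]; exact AEEqFun.coeFn_zero
  | insert a s hni ih =>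
    filter_upwards [AEEqFun.coeFn_add (f a) (∑ i ∈ s, f i), ih] with x h1 h2
    simp [Finset.sum_insert hni, h1, h2]


lemma integrable_of_bdd [IsFiniteMeasure m] {f : X → ℝ} (hf : AEStronglyMeasurable f m)
    (hb : ∀ x, |f x| ≤ 1) : Integrable f m :=
  Integrable.mono' (integrable_const 1) hf
    (Eventually.of_forall fun x => by simpa [Real.norm_eq_abs] using hb x)

lemma minabs_bdd (a : ℝ) : |min |a| 1| ≤ 1 :=
  abs_le.2 ⟨le_trans (by norm_num) (le_min (abs_nonneg _) one_pos.le), min_le_right _ _⟩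

lemma min_bdd {a : ℝ} (ha : 0 ≤ a) : |min a 1| ≤ 1 :=
  abs_le.2 ⟨le_trans (by norm_num) (le_min ha one_pos.le), min_le_right _ _⟩

lemma integrable_dL0 [IsFiniteMeasure m] (f g : X →ₘ[m] ℝ) :
    Integrable (fun x => min |f x - g x| 1) m :=
  integrable_of_bdd (((f.measurable.sub g.measurable).abs.min measurable_const).aestronglyMeasurable)
    fun x => minabs_bdd _

lemma dL0_nonneg [IsFiniteMeasure m] (f g : X →ₘ[m] ℝ) : 0 ≤ dL0 m f g :=
  MeasureTheory.integral_nonneg fun x => le_min (abs_nonneg _) one_pos.le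

lemma dL0_anti [IsProbabilityMeasure m] {f g h : X →ₘ[m] ℝ} (h1 : f ≤ g) (h2 : g ≤ h) :
    dL0 m g h ≤ dL0 m f h := by
  refine MeasureTheory.integral_mono_ae (integrable_dL0 g h) (integrable_dL0 f h) ?_
  filter_upwards [AEEqFun.coeFn_le.2 h1, AEEqFun.coeFn_le.2 h2] with x e1 e2
  refine min_le_min ?_ le_rfl
  rw [abs_of_nonpos (by linarith : g x - h x ≤ 0), abs_sub_comm]
  calc -(g x - h x) ≤ h x - f x := by linarith
    _ ≤ |h x - f x| := le_abs_self _

/-- If `0 ≤ g` and `∫ min g 1 ≤ 0` then `g = 0`. -/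
lemma eq_zero_of_integral_min [IsFiniteMeasure m] {g : X →ₘ[m] ℝ} (hg : 0 ≤ g)
    (h : ∫ x, min (g x) 1 ∂m ≤ 0) : g = 0 := by
  have hgae : ∀ᵐ x ∂m, 0 ≤ g x := by
    have := AEEqFun.coeFn_le.2 hg
    filter_upwards [this, AEEqFun.coeFn_zero (β := ℝ) (μ := m)] with x h1 h2
    rw [h2] at h1; exact h1
  have hnn : 0 ≤ᵐ[m] fun x => min (g x) 1 := by
    filter_upwards [hgae] with x hx; exact le_min hx one_pos.le
  have hint : Integrable (fun x => min (g x) 1) m := by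
    refine Integrable.mono' (integrable_const 1)
      ((g.measurable.min measurable_const).aestronglyMeasurable) ?_
    filter_upwards [hgae] with x hx
    simpa [Real.norm_eq_abs] using min_bdd hx
  have h0 : ∫ x, min (g x) 1 ∂m = 0 :=
    le_antisymm h (MeasureTheory.integral_nonneg_of_ae hnn)
  have := (MeasureTheory.integral_eq_zero_iff_of_nonneg_ae hnn hint).1 h0
  apply AEEqFun.ext
  filter_upwards [this, hgae, AEEqFun.coeFn_zero (β := ℝ) (μ := m)] with x h1 h2 h3
  rw [h3]
  rcases lt_or_ge (g x) 1 with hx | hx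
  · simpa [min_eq_left hx.le] using h1
  · simp only [Pi.zero_apply] at h1; rw [min_eq_right hx] at h1; linarith

/-- dL0-limits preserve the domination `|·| ≤ S`. -/
lemma abs_le_of_tendsto_dL0 [IsProbabilityMeasure m] {f : ℕ → X →ₘ[m] ℝ} {L S : X →ₘ[m] ℝ}
    (hd : Tendsto (fun n => dL0 m (f n) L) atTop (𝓝 0)) (hle : ∀ n, |f n| ≤ S) : |L| ≤ S := by
  set φ : X →ₘ[m] ℝ := (|L| - S) ⊔ 0 with hφdef
  have hφ : 0 ≤ φ := le_sup_right
  have key : ∀ n, ∫ x, min (φ x) 1 ∂m ≤ dL0 m (f n) L := by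
    intro n
    have hae : ∀ᵐ x ∂m, min (φ x) 1 ≤ min |f n x - L x| 1 := by
      have h1 := AEEqFun.coeFn_sup (|L| - S) (0 : X →ₘ[m] ℝ)
      have h2 := AEEqFun.coeFn_sub |L| S
      have h3 := AEEqFun.coeFn_abs L
      have h4 := AEEqFun.coeFn_le.2 (hle n)
      have h5 := AEEqFun.coeFn_abs (f n)
      filter_upwards [h1, h2, h3, h4, h5, AEEqFun.coeFn_zero (β := ℝ) (μ := m)]
        with x e1 e2 e3 e4 e5 e6
      have hfn : |f n x| ≤ S x := by rw [← e5]; exact e4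
      have e0 : (φ : X → ℝ) x = ((|L| - S) ⊔ 0 : X →ₘ[m] ℝ) x := by rw [hφdef]
      have eφ : (φ : X → ℝ) x = max (|L x| - S x) 0 := by
        rw [e0, e1, e6]; simp only [Pi.zero_apply]
        rw [e2]; simp only [Pi.sub_apply, e3]
      rw [eφ]
      refine min_le_min ?_ le_rfl
      refine max_le ?_ (abs_nonneg _)
      calc |L x| - S x ≤ |L x| - |f n x| := by linarith
        _ ≤ |L x - f n x| := by
              have := abs_sub_abs_le_abs_sub (L x) (f n x); linarith
        _ = |f n x - L x| := abs_sub_comm _ _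
    refine MeasureTheory.integral_mono_ae ?_ (integrable_dL0 _ _) hae
    · refine Integrable.mono' (integrable_const 1)
        ((φ.measurable.min measurable_const).aestronglyMeasurable) ?_
      have hgae : ∀ᵐ x ∂m, 0 ≤ φ x := by
        filter_upwards [AEEqFun.coeFn_le.2 hφ, AEEqFun.coeFn_zero (β := ℝ) (μ := m)] with x h1 h2
        rw [h2] at h1; exact h1
      filter_upwards [hgae] with x hx
      simpa [Real.norm_eq_abs] using min_bdd hx
  have hc : ∫ x, min (φ x) 1 ∂m ≤ 0 := ge_of_tendsto' hd key
  have hz := eq_zero_of_integral_min hφ hc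
  have hls : |L| - S ≤ 0 := by
    rw [← hz]; exact le_sup_left
  exact sub_nonpos.mp hls
/-- Monotone convergence: an increasing sequence converges in `dL0` to its LUB. -/
lemma tendsto_dL0_of_isLUB [IsProbabilityMeasure m] {h : ℕ → X →ₘ[m] ℝ} {H : X →ₘ[m] ℝ}
    (hmono : ∀ n, h n ≤ h (n + 1)) (hlub : IsLUB (Set.range h) H) :
    Tendsto (fun n => dL0 m (h n) H) atTop (𝓝 0) := by
  have hle : ∀ n, h n ≤ H := fun n => hlub.1 ⟨n, rfl⟩
  let u : ℕ → X → ℝ := fun n =>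
    Nat.rec (⇑(h 0)) (fun k fk => fun x => max (fk x) (⇑(h (k + 1)) x)) n
  have humeas : ∀ n, Measurable (u n) := by
    intro n; induction n with
    | zero => exact (h 0).measurable
    | succ k ih => exact ih.max (h (k + 1)).measurable
  have humono : ∀ n x, u n x ≤ u (n + 1) x := fun n x => le_max_left _ _
  let w : ℕ → X → ℝ := fun n x => min (u n x) (⇑H x)
  have hwmeas : ∀ n, Measurable (w n) := fun n => (humeas n).min H.measurable
  have hwmono' : ∀ x, Monotone fun n => w n x := fun x =>
    monotone_nat_of_le_succ fun n => min_le_min (humono n x) le_rfl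
  have hwle : ∀ n x, w n x ≤ ⇑H x := fun n x => min_le_right _ _
  have hgood : ∀ᵐ x ∂m, ∀ k, ⇑(h k) x ≤ ⇑(h (k + 1)) x ∧ ⇑(h k) x ≤ ⇑H x := by
    rw [MeasureTheory.ae_all_iff]
    intro k
    filter_upwards [AEEqFun.coeFn_le.2 (hmono k), AEEqFun.coeFn_le.2 (hle k)] with x a b
    exact ⟨a, b⟩
  have hwh : ∀ᵐ x ∂m, ∀ n, w n x = ⇑(h n) x := by
    filter_upwards [hgood] with x hx
    have hu : ∀ n, u n x = ⇑(h n) x := by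
      intro n; induction n with
      | zero => rfl
      | succ k ih =>
        show max (u k x) (⇑(h (k + 1)) x) = _
        rw [ih, max_eq_right (hx k).1]
    intro n
    show min (u n x) (⇑H x) = _
    rw [hu n, min_eq_left (hx n).2]
  set G : X → ℝ := fun x => ⨆ n, w n x with hGdef
  have hbdd : ∀ x, BddAbove (Set.range fun n => w n x) := fun x =>
    ⟨⇑H x, by rintro y ⟨n, rfl⟩; exact hwle n x⟩
  have hGtend : ∀ x, Tendsto (fun n => w n x) atTop (𝓝 (G x)) := fun x =>
    tendsto_atTop_ciSup (hwmono' x) (hbdd x)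
  have hGmeas : Measurable G :=
    measurable_of_tendsto_metrizable hwmeas (tendsto_pi_nhds.mpr hGtend)
  have hup : ∀ n, h n ≤ AEEqFun.mk G hGmeas.aestronglyMeasurable := by
    intro n
    rw [← AEEqFun.coeFn_le]
    filter_upwards [hwh, AEEqFun.coeFn_mk G hGmeas.aestronglyMeasurable] with x hx hmk
    rw [hmk, ← hx n]
    exact le_ciSup (hbdd x) n
  have hHG : H ≤ AEEqFun.mk G hGmeas.aestronglyMeasurable :=
    hlub.2 (by rintro y ⟨n, rfl⟩; exact hup n)
  have hGH : AEEqFun.mk G hGmeas.aestronglyMeasurable ≤ H := by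
    rw [← AEEqFun.coeFn_le]
    filter_upwards [AEEqFun.coeFn_mk G hGmeas.aestronglyMeasurable] with x hmk
    rw [hmk]
    exact ciSup_le fun n => hwle n x
  have hHeq : ⇑H =ᵐ[m] G := by
    have : AEEqFun.mk G hGmeas.aestronglyMeasurable = H := le_antisymm hGH hHG
    rw [← this]
    exact AEEqFun.coeFn_mk G hGmeas.aestronglyMeasurable
  have := MeasureTheory.tendsto_integral_of_dominated_convergence (μ := m)
    (F := fun n x => min |⇑(h n) x - ⇑H x| 1) (f := fun _ => (0 : ℝ)) (bound := fun _ => (1 : ℝ))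
    (fun n => integrable_dL0 (h n) H |>.aestronglyMeasurable)
    (MeasureTheory.integrable_const 1)
    (fun n => Eventually.of_forall fun x => by
      simpa [Real.norm_eq_abs] using minabs_bdd (⇑(h n) x - ⇑H x))
    ?_
  · simpa [dL0] using this
  · filter_upwards [hwh, hHeq] with x hx hHx
    have h1 : Tendsto (fun n => w n x) atTop (𝓝 (G x)) := hGtend x
    have h2 : Tendsto (fun n => min |w n x - G x| 1) atTop (𝓝 (min |G x - G x| 1)) :=
      ((h1.sub tendsto_const_nhds).abs).min tendsto_const_nhds
    have h3 : (fun n => min |w n x - G x| 1) = fun n => min |⇑(h n) x - ⇑H x| 1 := by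
      funext n; rw [hx n, hHx]
    rw [h3] at h2
    simpa using h2
/-- Every nonempty upward-directed set of nonnegative elements of `L⁰` which is bounded
above has a least upper bound. -/
lemma exists_isLUB_of_directed [IsProbabilityMeasure m] {S : Set (X →ₘ[m] ℝ)}
    {t : X →ₘ[m] ℝ} (hne : S.Nonempty) (hdir : DirectedOn (· ≤ ·) S)
    (hub : t ∈ upperBounds S) (hpos : ∀ g ∈ S, 0 ≤ g) : ∃ u, IsLUB S u := by
  classical
  set T : X → ℝ := fun x => max (⇑t x) 0 with hTdef
  have hTmeas : Measurable T := t.measurable.max measurable_const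
  have hT0 : ∀ x, 0 ≤ T x := fun x => le_max_right _ _
  set clamp : (X →ₘ[m] ℝ) → X → ℝ := fun g x => min (max (⇑g x) 0) (T x) with hclampdef
  have hclamp_meas : ∀ g, Measurable (clamp g) := fun g =>
    (g.measurable.max measurable_const).min hTmeas
  have hclamp0 : ∀ g x, 0 ≤ clamp g x := fun g x =>
    le_min (le_max_right _ _) (hT0 x)
  have hclampT : ∀ g x, clamp g x ≤ T x := fun g x => min_le_right _ _
  have hclamp_mono : ∀ (g h : X →ₘ[m] ℝ) (x : X), ⇑g x ≤ ⇑h x → clamp g x ≤ clamp h x :=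
    fun g h x hx => min_le_min (max_le_max hx le_rfl) le_rfl
  have hclamp_ae : ∀ g ∈ S, ⇑g =ᵐ[m] clamp g := by
    intro g hg
    filter_upwards [AEEqFun.coeFn_le.2 (hpos g hg), AEEqFun.coeFn_le.2 (hub hg),
      AEEqFun.coeFn_zero (β := ℝ) (μ := m)] with x h1 h2 h3
    rw [h3] at h1
    simp only [Pi.zero_apply] at h1
    show ⇑g x = min (max (⇑g x) 0) (T x)
    rw [max_eq_left h1, min_eq_left (le_trans h2 (le_max_left _ _))]
  set den : X → ℝ := fun x => 1 + T x with hdendef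
  have hden_pos : ∀ x, 0 < den x := fun x => by
    have := hT0 x; simp only [hdendef]; linarith
  have hden_meas : Measurable den := measurable_const.add hTmeas
  have hratio_bdd : ∀ (f : X → ℝ), (∀ x, 0 ≤ f x) → (∀ x, f x ≤ T x) →
      ∀ x, |f x / den x| ≤ 1 := by
    intro f h0 h1 x
    rw [abs_of_nonneg (div_nonneg (h0 x) (hden_pos x).le), div_le_one (hden_pos x)]
    have := h1 x; simp only [hdendef]; linarith
  have hint : ∀ (f : X → ℝ), Measurable f → (∀ x, 0 ≤ f x) → (∀ x, f x ≤ T x) →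
      Integrable (fun x => f x / den x) m := fun f hf h0 h1 =>
    integrable_of_bdd ((hf.div hden_meas).aestronglyMeasurable) (hratio_bdd f h0 h1)
  set J : (X →ₘ[m] ℝ) → ℝ := fun g => ∫ x, clamp g x / den x ∂m with hJdef
  have hJint : ∀ g, Integrable (fun x => clamp g x / den x) m := fun g =>
    hint _ (hclamp_meas g) (hclamp0 g) (hclampT g)
  have hJmono : ∀ g h : X →ₘ[m] ℝ, g ≤ h → J g ≤ J h := by
    intro g h hgh
    refine MeasureTheory.integral_mono_ae (hJint g) (hJint h) ?_
    filter_upwards [AEEqFun.coeFn_le.2 hgh] with x hx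
    exact (div_le_div_iff_of_pos_right (hden_pos x)).2 (hclamp_mono g h x hx)
  have hJle1 : ∀ g, J g ≤ 1 := by
    intro g
    have : ∀ x, clamp g x / den x ≤ 1 := fun x => by
      have := hratio_bdd (clamp g) (hclamp0 g) (hclampT g) x
      exact (abs_le.1 this).2
    calc J g ≤ ∫ _x, (1 : ℝ) ∂m :=
          MeasureTheory.integral_mono (hJint g) (MeasureTheory.integrable_const 1)
            (fun x => this x)
      _ = 1 := by simp
  -- The chain-limit auxiliary construction
  have aux : ∀ c : ℕ → {g // g ∈ S}, (∀ n, (c n).1 ≤ (c (n + 1)).1) →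
      ∃ G : X →ₘ[m] ℝ, (∀ n, (c n).1 ≤ G) ∧ (∀ b, (∀ n, (c n).1 ≤ b) → G ≤ b) ∧
        Tendsto (fun n => J (c n).1) atTop (𝓝 (J G)) ∧ ⇑G =ᵐ[m] clamp G := by
    intro c hc
    set v : ℕ → X → ℝ := fun n =>
      Nat.rec (clamp (c 0).1) (fun k fk x => max (fk x) (clamp (c (k + 1)).1 x)) n with hvdef
    have hvmeas : ∀ n, Measurable (v n) := by
      intro n; induction n with
      | zero => exact hclamp_meas _
      | succ k ih => exact ih.max (hclamp_meas _)
    have hvmono : ∀ n x, v n x ≤ v (n + 1) x := fun n x => le_max_left _ _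
    have hvmono' : ∀ x, Monotone fun n => v n x := fun x =>
      monotone_nat_of_le_succ fun n => hvmono n x
    have hv0 : ∀ n x, 0 ≤ v n x := by
      intro n; induction n with
      | zero => exact hclamp0 _
      | succ k ih => exact fun x => le_trans (ih x) (le_max_left _ _)
    have hvT : ∀ n x, v n x ≤ T x := by
      intro n; induction n with
      | zero => exact hclampT _
      | succ k ih => exact fun x => max_le (ih x) (hclampT _ x)
    have hgood : ∀ᵐ x ∂m, ∀ k, ⇑((c k).1) x ≤ ⇑((c (k + 1)).1) x := by
      rw [MeasureTheory.ae_all_iff]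
      exact fun k => AEEqFun.coeFn_le.2 (hc k)
    have hva : ∀ᵐ x ∂m, ∀ n, v n x = clamp ((c n).1) x := by
      filter_upwards [hgood] with x hx
      intro n; induction n with
      | zero => rfl
      | succ k ih =>
        show max (v k x) (clamp (c (k + 1)).1 x) = _
        rw [ih, max_eq_right (hclamp_mono _ _ x (hx k))]
    set G : X → ℝ := fun x => ⨆ n, v n x with hGdef
    have hbdd : ∀ x, BddAbove (Set.range fun n => v n x) := fun x =>
      ⟨T x, by rintro y ⟨n, rfl⟩; exact hvT n x⟩
    have hGtend : ∀ x, Tendsto (fun n => v n x) atTop (𝓝 (G x)) := fun x =>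
      tendsto_atTop_ciSup (hvmono' x) (hbdd x)
    have hGmeas : Measurable G :=
      measurable_of_tendsto_metrizable hvmeas (tendsto_pi_nhds.mpr hGtend)
    have hG0 : ∀ x, 0 ≤ G x := fun x => le_trans (hv0 0 x) (le_ciSup (hbdd x) 0)
    have hGT : ∀ x, G x ≤ T x := fun x => ciSup_le fun n => hvT n x
    refine ⟨AEEqFun.mk G hGmeas.aestronglyMeasurable, ?_, ?_, ?_, ?_⟩
    · intro n
      rw [← AEEqFun.coeFn_le]
      filter_upwards [hva, hclamp_ae (c n).1 (c n).2,
        AEEqFun.coeFn_mk G hGmeas.aestronglyMeasurable] with x h1 h2 h3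
      rw [h3, h2, ← h1 n]
      exact le_ciSup (hbdd x) n
    · intro b hb
      rw [← AEEqFun.coeFn_le]
      have hball : ∀ᵐ x ∂m, ∀ n, ⇑((c n).1) x ≤ ⇑b x :=
        MeasureTheory.ae_all_iff.2 fun n => AEEqFun.coeFn_le.2 (hb n)
      have hclae : ∀ᵐ x ∂m, ∀ n, ⇑((c n).1) x = clamp ((c n).1) x :=
        MeasureTheory.ae_all_iff.2 fun n => hclamp_ae (c n).1 (c n).2
      filter_upwards [hva, hball, hclae,
        AEEqFun.coeFn_mk G hGmeas.aestronglyMeasurable] with x h1 h2 h3 h4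
      rw [h4]
      exact ciSup_le fun n => by rw [h1 n, ← h3 n]; exact h2 n
    · have hJn : ∀ n, J ((c n).1) = ∫ x, v n x / den x ∂m := by
        intro n
        refine MeasureTheory.integral_congr_ae ?_
        filter_upwards [hva] with x h1
        rw [h1 n]
      have hdct : Tendsto (fun n => ∫ x, v n x / den x ∂m) atTop
          (𝓝 (∫ x, G x / den x ∂m)) := by
        refine MeasureTheory.tendsto_integral_of_dominated_convergence
          (bound := fun _ => (1 : ℝ))
          (fun n => ((hvmeas n).div hden_meas).aestronglyMeasurable)
          (MeasureTheory.integrable_const 1) (fun n => Eventually.of_forall fun x => by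
            simpa only [Real.norm_eq_abs] using hratio_bdd (v n) (hv0 n) (hvT n) x) ?_
        exact Eventually.of_forall fun x => (hGtend x).div_const _
      have hJG : J (AEEqFun.mk G hGmeas.aestronglyMeasurable) = ∫ x, G x / den x ∂m := by
        refine MeasureTheory.integral_congr_ae ?_
        filter_upwards [AEEqFun.coeFn_mk G hGmeas.aestronglyMeasurable] with x h1
        show min (max (⇑(AEEqFun.mk G hGmeas.aestronglyMeasurable) x) 0) (T x) / den x = _
        rw [h1, max_eq_left (hG0 x), min_eq_left (hGT x)]
      rw [hJG]
      simpa only [hJn] using hdct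
    · filter_upwards [AEEqFun.coeFn_mk G hGmeas.aestronglyMeasurable] with x h1
      show _ = min (max (⇑(AEEqFun.mk G hGmeas.aestronglyMeasurable) x) 0) (T x)
      rw [h1, max_eq_left (hG0 x), min_eq_left (hGT x)]
  -- supremum of the J-values
  have hsne : (J '' S).Nonempty := hne.image J
  have hsbdd : BddAbove (J '' S) := ⟨1, by rintro y ⟨g, hg, rfl⟩; exact hJle1 g⟩
  set s : ℝ := sSup (J '' S) with hsdef
  have hg0seq : ∀ n : ℕ, ∃ g, g ∈ S ∧ s - 1 / (n + 1) < J g := by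
    intro n
    have h1 : s - 1 / ((n : ℝ) + 1) < s := by
      have : (0 : ℝ) < 1 / ((n : ℝ) + 1) := by positivity
      linarith
    obtain ⟨y, hy, hy2⟩ := exists_lt_of_lt_csSup hsne h1
    obtain ⟨g, hg, rfl⟩ := hy
    exact ⟨g, hg, hy2⟩
  choose g₀ hg₀S hg₀J using hg0seq
  -- directedness as a function on the subtype
  have hdir' : ∀ a b : {g // g ∈ S}, ∃ c : {g // g ∈ S}, a.1 ≤ c.1 ∧ b.1 ≤ c.1 := by
    intro a b
    obtain ⟨c, hc, h1, h2⟩ := hdir a.1 a.2 b.1 b.2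
    exact ⟨⟨c, hc⟩, h1, h2⟩
  choose F hF1 hF2 using hdir'
  set u : ℕ → {g // g ∈ S} := fun n =>
    Nat.rec ⟨g₀ 0, hg₀S 0⟩ (fun k p => F p ⟨g₀ (k + 1), hg₀S (k + 1)⟩) n with hudef
  have hu_mono : ∀ n, (u n).1 ≤ (u (n + 1)).1 := fun n => hF1 _ _
  have hu_ge : ∀ n, g₀ n ≤ (u n).1 := by
    intro n; cases n with
    | zero => exact le_rfl
    | succ k => exact hF2 _ _
  have hJu_le : ∀ n, J (u n).1 ≤ s := fun n => le_csSup hsbdd ⟨_, (u n).2, rfl⟩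
  have hJu_gt : ∀ n, s - 1 / (n + 1) < J (u n).1 := fun n =>
    lt_of_lt_of_le (hg₀J n) (hJmono _ _ (hu_ge n))
  have hJutend : Tendsto (fun n => J (u n).1) atTop (𝓝 s) := by
    have hlow : Tendsto (fun n : ℕ => s - 1 / ((n : ℝ) + 1)) atTop (𝓝 s) := by
      have h0 : Tendsto (fun n : ℕ => 1 / ((n : ℝ) + 1)) atTop (𝓝 0) :=
        tendsto_one_div_add_atTop_nhds_zero_nat
      have h2 := Tendsto.sub (tendsto_const_nhds : Tendsto (fun _ : ℕ => s) atTop (𝓝 s)) h0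
      simpa using h2
    exact tendsto_of_tendsto_of_tendsto_of_le_of_le hlow tendsto_const_nhds
      (fun n => (hJu_gt n).le) hJu_le
  obtain ⟨G, hG1, hG2, hG3, hG4⟩ := aux u hu_mono
  have hJGs : J G = s := tendsto_nhds_unique hG3 hJutend
  refine ⟨G, ?_, ?_⟩
  · -- upper bound
    intro g hg
    set z : ℕ → {g // g ∈ S} := fun n =>
      Nat.rec (F (u 0) ⟨g, hg⟩) (fun k p => F (u (k + 1)) p) n with hzdef
    have hz_mono : ∀ n, (z n).1 ≤ (z (n + 1)).1 := fun n => hF2 _ _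
    have hz_geu : ∀ n, (u n).1 ≤ (z n).1 := by
      intro n; cases n with
      | zero => exact hF1 _ _
      | succ k => exact hF1 _ _
    have hz_geg : ∀ n, g ≤ (z n).1 := by
      intro n; induction n with
      | zero => exact hF2 _ _
      | succ k ih => exact le_trans ih (hz_mono k)
    obtain ⟨G', hG'1, hG'2, hG'3, hG'4⟩ := aux z hz_mono
    have hGG' : G ≤ G' := hG2 _ fun n => le_trans (hz_geu n) (hG'1 n)
    have hJz_le : ∀ n, J (z n).1 ≤ s := fun n => le_csSup hsbdd ⟨_, (z n).2, rfl⟩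
    have hJz_ge : ∀ n, J (u n).1 ≤ J (z n).1 := fun n => hJmono _ _ (hz_geu n)
    have hJztend : Tendsto (fun n => J (z n).1) atTop (𝓝 s) :=
      tendsto_of_tendsto_of_tendsto_of_le_of_le hJutend tendsto_const_nhds hJz_ge hJz_le
    have hJG's : J G' = s := tendsto_nhds_unique hG'3 hJztend
    -- from J G = J G' and G ≤ G', conclude G = G'
    have hGeqG' : G = G' := by
      have hsub : ∫ x, (clamp G' x / den x - clamp G x / den x) ∂m = 0 := by
        rw [MeasureTheory.integral_sub (hJint G') (hJint G)]
        show J G' - J G = 0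
        rw [hJGs, hJG's]; ring
      have hnn : 0 ≤ᵐ[m] fun x => clamp G' x / den x - clamp G x / den x := by
        filter_upwards [AEEqFun.coeFn_le.2 hGG'] with x hx
        have := hclamp_mono G G' x hx
        have h2 : clamp G x / den x ≤ clamp G' x / den x :=
          (div_le_div_iff_of_pos_right (hden_pos x)).2 this
        simp only [Pi.zero_apply]; linarith
      have := (MeasureTheory.integral_eq_zero_iff_of_nonneg_ae hnn
        ((hJint G').sub (hJint G))).1 hsub
      apply AEEqFun.ext
      filter_upwards [this, AEEqFun.coeFn_le.2 hGG', hG4, hG'4] with x h1 h2 h3 h4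
      have h1' : clamp G' x / den x = clamp G x / den x := by
        simp only [Pi.zero_apply] at h1; linarith
      have h5 : clamp G' x = clamp G x := by
        have hd := (hden_pos x).ne'
        rw [div_eq_div_iff hd hd] at h1'
        exact mul_right_cancel₀ hd h1'
      rw [h3, h4, h5]
    rw [hGeqG']
    exact le_trans (hz_geg 0) (hG'1 0)
  · -- least upper bound
    intro b hb
    exact hG2 b fun n => hb (u n).2
section LUBAlgebra

variable {G : Type*} [AddCommGroup G] [PartialOrder G] [IsOrderedAddMonoid G]

lemma isLUB_range_add {p q : ℕ → G} {a b : G}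
    (hp : Monotone p) (hq : Monotone q)
    (ha : IsLUB (Set.range p) a) (hb : IsLUB (Set.range q) b) :
    IsLUB (Set.range fun n => p n + q n) (a + b) := by
  constructor
  · rintro y ⟨n, rfl⟩
    exact add_le_add (ha.1 ⟨n, rfl⟩) (hb.1 ⟨n, rfl⟩)
  · intro u hu
    have key : ∀ n m2 : ℕ, p n + q m2 ≤ u := fun n m2 =>
      le_trans (add_le_add (hp (le_max_left n m2)) (hq (le_max_right n m2)))
        (hu ⟨max n m2, rfl⟩)
    have h3 : ∀ n, p n ≤ u - b := by
      intro n
      have hbn : b ≤ u - p n := hb.2 (by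
        rintro y ⟨m2, rfl⟩
        rw [le_sub_iff_add_le, add_comm]
        exact key n m2)
      rwa [le_sub_comm] at hbn
    have ha' : a ≤ u - b := ha.2 (by rintro y ⟨n, rfl⟩; exact h3 n)
    rwa [le_sub_iff_add_le] at ha'

lemma isLUB_range_sum {ι : Type*} [DecidableEq ι] (F : Finset ι) {p : ι → ℕ → G} {S : ι → G}
    (hp : ∀ i ∈ F, Monotone (p i)) (hS : ∀ i ∈ F, IsLUB (Set.range (p i)) (S i)) :
    IsLUB (Set.range fun n => ∑ i ∈ F, p i n) (∑ i ∈ F, S i) := by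
  induction F using Finset.induction with
  | empty => simp only [Finset.sum_empty, Set.range_const]; exact isLUB_singleton
  | insert j F' hj ih =>
    simp only [Finset.sum_insert hj]
    exact isLUB_range_add (hp j (Finset.mem_insert_self j F'))
      (fun n m2 hnm => Finset.sum_le_sum fun i2 hi2 => hp i2 (Finset.mem_insert_of_mem hi2) hnm)
      (hS j (Finset.mem_insert_self j F'))
      (ih (fun i hi => hp i (Finset.mem_insert_of_mem hi))
        (fun i hi => hS i (Finset.mem_insert_of_mem hi)))

lemma monotone_partial_sums {a : ℕ → G} (h0 : ∀ i, 0 ≤ a i) :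
    Monotone fun n => ∑ i ∈ Finset.range n, a i := fun n m2 hnm =>
  Finset.sum_le_sum_of_subset_of_nonneg (Finset.range_subset_range.2 hnm) fun i _ _ => h0 i

lemma sum_finset_le_of_isLUB {a : ℕ → G} (h0 : ∀ i, 0 ≤ a i) {k : G}
    (hk : IsLUB (Set.range fun n => ∑ i ∈ Finset.range n, a i) k) (F : Finset ℕ) :
    ∑ i ∈ F, a i ≤ k := by
  obtain ⟨N, hN⟩ : ∃ N, F ⊆ Finset.range N :=
    ⟨F.sup id + 1, fun x hx => Finset.mem_range.2 (Nat.lt_succ_of_le (Finset.le_sup (f := id) hx))⟩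
  exact le_trans (Finset.sum_le_sum_of_subset_of_nonneg hN fun i _ _ => h0 i) (hk.1 ⟨N, rfl⟩)

lemma sum_isLUB_le {ι : Type*} [DecidableEq ι] (F : Finset ι) {s : ι → Set G} {S : ι → G} {u : G}
    (hS : ∀ i ∈ F, IsLUB (s i) (S i))
    (hb : ∀ x : ι → G, (∀ i ∈ F, x i ∈ s i) → ∑ i ∈ F, x i ≤ u) :
    ∑ i ∈ F, S i ≤ u := by
  induction F using Finset.induction generalizing u with
  | empty => simpa using hb (fun _ => 0) (by simp)
  | @insert j F' hj ih =>
    rw [Finset.sum_insert hj]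
    have key : ∀ y ∈ s j, ∑ i ∈ F', S i ≤ u - y := by
      intro y hy
      refine ih (fun i hi => hS i (Finset.mem_insert_of_mem hi)) ?_
      intro x hx
      have hmem : ∀ i ∈ insert j F', Function.update x j y i ∈ s i := by
        intro i hi
        rcases Finset.mem_insert.1 hi with rfl | hi'
        · rw [Function.update_self]; exact hy
        · rw [Function.update_of_ne (fun h : i = j => hj (h ▸ hi'))]; exact hx i hi'
      have := hb _ hmem
      rw [Finset.sum_insert hj, Function.update_self] at this
      have hsum : ∑ i ∈ F', Function.update x j y i = ∑ i ∈ F', x i :=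
        Finset.sum_congr rfl fun i hi => Function.update_of_ne (fun h : i = j => hj (h ▸ hi)) _ _
      rw [hsum] at this
      rw [le_sub_iff_add_le, add_comm]
      exact this
    have hSj : S j ≤ u - ∑ i ∈ F', S i := by
      refine (hS j (Finset.mem_insert_self j F')).2 ?_
      intro y hy
      exact le_sub_comm.1 (key y hy)
    rwa [← le_sub_iff_add_le]

lemma isLUB_range_const {c : G} : IsLUB (Set.range fun _ : ℕ => c) c := by
  rw [Set.range_const]; exact isLUB_singleton

/-- Summing least upper bounds of the rows of a doubly-indexed nonnegative family, whose
entries are (injectively) among the terms of a summable sequence, stays below the total sum. -/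
lemma sum_lub_le_of_inj {a : ℕ → G} (h0 : ∀ i, 0 ≤ a i) {h : G}
    (hh : IsLUB (Set.range fun n => ∑ i ∈ Finset.range n, a i) h)
    (ι : ℕ → ℕ → ℕ) (hinj : Function.Injective fun p : ℕ × ℕ => ι p.1 p.2)
    {b : ℕ → ℕ → G} (hba : ∀ i j, b i j = a (ι i j))
    {S : ℕ → G} (hS : ∀ i, IsLUB (Set.range fun p => ∑ j ∈ Finset.range p, b i j) (S i))
    (n : ℕ) : ∑ i ∈ Finset.range n, S i ≤ h := by
  have hb0 : ∀ i j, 0 ≤ b i j := fun i j => (hba i j) ▸ h0 _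
  have hlub := isLUB_range_sum (Finset.range n)
    (p := fun i q => ∑ j ∈ Finset.range q, b i j) (S := S)
    (fun i _ => monotone_partial_sums fun j => hb0 i j) (fun i _ => hS i)
  refine hlub.2 ?_
  rintro y ⟨p, rfl⟩
  show ∑ i ∈ Finset.range n, ∑ j ∈ Finset.range p, b i j ≤ h
  have hre : ∑ k ∈ (Finset.range n ×ˢ Finset.range p).image (fun q : ℕ × ℕ => ι q.1 q.2), a k
      = ∑ i ∈ Finset.range n, ∑ j ∈ Finset.range p, b i j := by
    rw [Finset.sum_image (fun x _ y _ hxy => hinj hxy), Finset.sum_product]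
    exact Finset.sum_congr rfl fun i _ => Finset.sum_congr rfl fun j _ => (hba i j).symm
  rw [← hre]
  exact sum_finset_le_of_isLUB h0 hh _

end LUBAlgebra


end AuxLemmas

section TVConstruction

open MeasureTheory

variable {m : Measure X} [MeasurableSpace Ω]

lemma abs_sum_le0 {ι : Type*} (F : Finset ι) (v : ι → X →ₘ[m] ℝ) :
    |∑ i ∈ F, v i| ≤ ∑ i ∈ F, |v i| := by
  classical
  induction F using Finset.induction with
  | empty => simp only [Finset.sum_empty]; rw [abs_of_nonneg0 le_rfl]
  | @insert j F' hj ih =>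
    rw [Finset.sum_insert hj, Finset.sum_insert hj]
    exact le_trans (abs_add0 _ _) (add_le_add le_rfl ih)

/-- Partial sums over any disjoint measurable family are dominated by the total variation. -/
lemma partial_le_tv (μ : L0Measure m Ω) {t : X →ₘ[m] ℝ} (ht : HasTV m μ.toFun univ t)
    {B : ℕ → Set Ω} (hBm : ∀ n, MeasurableSet (B n)) (hBd : Pairwise (Disjoint on B)) :
    ∀ n, ∑ i ∈ Finset.range n, |μ.toFun (B i)| ≤ t := by
  set C : ℕ → Set Ω := fun k => match k with
    | 0 => (⋃ n, B n)ᶜ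
    | k + 1 => B k with hCdef
  have hCm : ∀ n, MeasurableSet (C n) := by
    intro n; match n with
    | 0 => exact (MeasurableSet.iUnion hBm).compl
    | k + 1 => exact hBm k
  have hCd : Pairwise (Disjoint on C) := by
    intro i j hij
    match i, j with
    | 0, 0 => exact absurd rfl hij
    | 0, k + 1 => exact Disjoint.mono_right (subset_iUnion B k) disjoint_compl_left
    | k + 1, 0 => exact (Disjoint.mono_right (subset_iUnion B k) disjoint_compl_left).symm
    | k + 1, l + 1 => exact hBd (fun hkl => hij (by rw [hkl]))
  have hCu : ⋃ n, C n = univ := by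
    apply eq_univ_of_forall
    intro x
    by_cases hx : x ∈ ⋃ n, B n
    · obtain ⟨n, hxn⟩ := mem_iUnion.1 hx
      exact mem_iUnion.2 ⟨n + 1, hxn⟩
    · exact mem_iUnion.2 ⟨0, hx⟩
  intro n
  have h1 := ht.1 C hCm hCd hCu (n + 1)
  rw [Finset.sum_range_succ'] at h1
  have h2 : ∑ i ∈ Finset.range n, |μ.toFun (B i)| = ∑ i ∈ Finset.range n, |μ.toFun (C (i + 1))| :=
    rfl
  rw [h2]
  exact le_trans (le_add_of_nonneg_right (abs_nonneg0 _)) h1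

/-- The sum of `|μ (B n)|` over any disjoint measurable family exists in `L⁰`. -/
lemma sum_exists (μ : L0Measure m Ω) [IsProbabilityMeasure m] {B : ℕ → Set Ω}
    (hBm : ∀ n, MeasurableSet (B n)) (hBd : Pairwise (Disjoint on B)) :
    ∃ g, HasL0Sum m (fun n => |μ.toFun (B n)|) g := by
  obtain ⟨b, hb⟩ := μ.summable' B hBm hBd
  have h0 : ∀ i, 0 ≤ |μ.toFun (B i)| := fun i => abs_nonneg0 _
  refine exists_isLUB_of_directed ⟨_, ⟨0, rfl⟩⟩ ?_ hb ?_
  · rintro x ⟨n, rfl⟩ y ⟨p, rfl⟩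
    exact ⟨_, ⟨max n p, rfl⟩, monotone_partial_sums h0 (le_max_left _ _),
      monotone_partial_sums h0 (le_max_right _ _)⟩
  · rintro g ⟨n, rfl⟩
    exact Finset.sum_nonneg fun i _ => h0 i

/-- `|μ (⋃ n, C n)|` is at most the sum of the `|μ (C n)|`. -/
lemma abs_union_le (μ : L0Measure m Ω) [IsProbabilityMeasure m] {C : ℕ → Set Ω}
    (hCm : ∀ n, MeasurableSet (C n)) (hCd : Pairwise (Disjoint on C)) {g : X →ₘ[m] ℝ}
    (hg : HasL0Sum m (fun n => |μ.toFun (C n)|) g) :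
    |μ.toFun (⋃ n, C n)| ≤ g := by
  have hd : Tendsto (fun n : ℕ => dL0 m (∑ i ∈ Finset.range n, μ.toFun (C i))
      (μ.toFun (⋃ n, C n))) atTop (𝓝 0) :=
    (μ.additive' C hCm hCd).comp tendsto_finset_range
  refine abs_le_of_tendsto_dL0 hd ?_
  intro n
  calc |∑ i ∈ Finset.range n, μ.toFun (C i)| ≤ ∑ i ∈ Finset.range n, |μ.toFun (C i)| :=
        abs_sum_le0 _ _
    _ ≤ g := hg.1 ⟨n, rfl⟩


lemma pSums_nonneg {μ : Set Ω → X →ₘ[m] ℝ} {A : Set Ω} {g : X →ₘ[m] ℝ}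
    (hg : g ∈ partitionSums m μ A) : 0 ≤ g := by
  obtain ⟨B, _, _, _, hsum⟩ := hg
  simpa using hsum.1 ⟨0, rfl⟩

/-- `partitionSums` of a measurable set is nonempty (use the trivial partition). -/
lemma exists_mem_pSums (μ : L0Measure m Ω) [IsProbabilityMeasure m] {A : Set Ω}
    (hA : MeasurableSet A) : ∃ g, g ∈ partitionSums m μ.toFun A := by
  classical
  set B : ℕ → Set Ω := fun k => if k = 0 then A else ∅ with hBdef
  have hBm : ∀ n, MeasurableSet (B n) := by
    intro n; by_cases h : n = 0 <;> simp [hBdef, h, hA]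
  have hBd : Pairwise (Disjoint on B) := by
    intro i j hij
    rcases eq_or_ne i 0 with rfl | hi
    · have hj : B j = ∅ := if_neg (Ne.symm hij)
      simp [Function.onFun, hj]
    · have hi' : B i = ∅ := if_neg hi
      simp [Function.onFun, hi']
  have hBu : ⋃ n, B n = A := by
    ext x
    simp only [mem_iUnion, hBdef]
    constructor
    · rintro ⟨k, hk⟩
      by_cases h : k = 0
      · rwa [if_pos h] at hk
      · rw [if_neg h] at hk; exact absurd hk (notMem_empty x)
    · intro hx; exact ⟨0, by simpa using hx⟩
  obtain ⟨g, hg⟩ := sum_exists μ hBm hBd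
  exact ⟨g, B, hBm, hBd, hBu, hg⟩

/-- Every measurable set admits a total variation. -/
lemma exists_hasTV (μ : L0Measure m Ω) [IsProbabilityMeasure m] {t : X →ₘ[m] ℝ}
    (ht : HasTV m μ.toFun univ t) {A : Set Ω} (hA : MeasurableSet A) :
    ∃ u, HasTV m μ.toFun A u := by
  classical
  have hub : ∀ g ∈ partitionSums m μ.toFun A, g ≤ t := by
    rintro g ⟨B, hBm, hBd, hBu, hsum⟩
    exact hsum.2 (by rintro y ⟨n, rfl⟩; exact partial_le_tv μ ht hBm hBd n)
  have hne : (partitionSums m μ.toFun A).Nonempty := by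
    set B : ℕ → Set Ω := fun k => if k = 0 then A else ∅ with hBdef
    have hBm : ∀ n, MeasurableSet (B n) := by
      intro n; by_cases h : n = 0 <;> simp [hBdef, h, hA]
    have hBd : Pairwise (Disjoint on B) := by
      intro i j hij
      rcases eq_or_ne i 0 with rfl | hi
      · have hj : B j = ∅ := if_neg (Ne.symm hij)
        simp [Function.onFun, hj]
      · have hi' : B i = ∅ := if_neg hi
        simp [Function.onFun, hi']
    have hBu : ⋃ n, B n = A := by
      ext x
      simp only [mem_iUnion, hBdef]
      constructor
      · rintro ⟨k, hk⟩
        by_cases h : k = 0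
        · rwa [if_pos h] at hk
        · rw [if_neg h] at hk; exact absurd hk (notMem_empty x)
      · intro hx; exact ⟨0, by simpa using hx⟩
    obtain ⟨g, hg⟩ := sum_exists μ hBm hBd
    exact ⟨g, B, hBm, hBd, hBu, hg⟩
  have hdir : DirectedOn (· ≤ ·) (partitionSums m μ.toFun A) := by
    rintro g ⟨B, hBm, hBd, hBu, hgsum⟩ h ⟨C, hCm, hCd, hCu, hhsum⟩
    set e : ℕ ≃ ℕ × ℕ := (Denumerable.eqv (ℕ × ℕ)).symm with hedef
    set D : ℕ → Set Ω := fun k => B (e k).1 ∩ C (e k).2 with hDdef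
    have hDm : ∀ k, MeasurableSet (D k) := fun k => (hBm _).inter (hCm _)
    have hDd : Pairwise (Disjoint on D) := by
      intro i j hij
      have hne' : e i ≠ e j := fun hh => hij (e.injective hh)
      by_cases h1 : (e i).1 = (e j).1
      · have h2 : (e i).2 ≠ (e j).2 := by
          intro h2
          exact hne' (Prod.ext_iff.2 ⟨h1, h2⟩)
        exact (hCd h2).mono inter_subset_right inter_subset_right
      · exact (hBd h1).mono inter_subset_left inter_subset_left
    have hDu : ⋃ k, D k = A := by
      ext x
      simp only [mem_iUnion, hDdef, mem_inter_iff]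
      constructor
      · rintro ⟨k, hx1, _⟩
        rw [← hBu]; exact mem_iUnion.2 ⟨(e k).1, hx1⟩
      · intro hx
        have hxB : x ∈ ⋃ n, B n := hBu ▸ hx
        have hxC : x ∈ ⋃ n, C n := hCu ▸ hx
        obtain ⟨i, hi⟩ := mem_iUnion.1 hxB
        obtain ⟨j, hj⟩ := mem_iUnion.1 hxC
        refine ⟨e.symm (i, j), ?_, ?_⟩ <;> simp [hi, hj]
    obtain ⟨k0, hk0⟩ := sum_exists μ hDm hDd
    have hBsub : ∀ i, B i ⊆ A := fun i => hBu ▸ subset_iUnion B i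
    have hCsub : ∀ j, C j ⊆ A := fun j => hCu ▸ subset_iUnion C j
    -- row sums
    have hrowm : ∀ i j, MeasurableSet (B i ∩ C j) := fun i j => (hBm i).inter (hCm j)
    have hrowd : ∀ i, Pairwise (Disjoint on fun j => B i ∩ C j) := fun i j j' hjj =>
      (hCd hjj).mono inter_subset_right inter_subset_right
    choose Srow hSrow using fun i => sum_exists μ (hrowm i) (hrowd i)
    have hrowle : ∀ i, |μ.toFun (B i)| ≤ Srow i := by
      intro i
      have hu2 : ⋃ j, B i ∩ C j = B i := by
        rw [← Set.inter_iUnion, hCu]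
        exact inter_eq_self_of_subset_left (hBsub i)
      have := abs_union_le μ (hrowm i) (hrowd i) (hSrow i)
      rwa [hu2] at this
    -- column sums
    have hcolm : ∀ j i, MeasurableSet (B i ∩ C j) := fun j i => (hBm i).inter (hCm j)
    have hcold : ∀ j, Pairwise (Disjoint on fun i => B i ∩ C j) := fun j i i' hii =>
      (hBd hii).mono inter_subset_left inter_subset_left
    choose Tcol hTcol using fun j => sum_exists μ (hcolm j) (hcold j)
    have hcolle : ∀ j, |μ.toFun (C j)| ≤ Tcol j := by
      intro j
      have hu2 : ⋃ i, B i ∩ C j = C j := by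
        rw [← Set.iUnion_inter, hBu]
        exact inter_eq_self_of_subset_right (hCsub j)
      have := abs_union_le μ (hcolm j) (hcold j) (hTcol j)
      rwa [hu2] at this
    have ha0 : ∀ k, (0 : X →ₘ[m] ℝ) ≤ |μ.toFun (D k)| := fun k => abs_nonneg0 _
    have hDval : ∀ i j, D (e.symm (i, j)) = B i ∩ C j := by
      intro i j
      rw [hDdef]
      simp
    have hglek : g ≤ k0 := by
      refine hgsum.2 ?_
      rintro y ⟨n, rfl⟩
      have hinj : Function.Injective fun p : ℕ × ℕ => e.symm (p.1, p.2) := by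
        intro p q hpq
        have h2 := e.symm.injective hpq
        cases p; cases q; simpa using h2
      calc ∑ i ∈ Finset.range n, |μ.toFun (B i)| ≤ ∑ i ∈ Finset.range n, Srow i :=
            Finset.sum_le_sum fun i _ => hrowle i
        _ ≤ k0 := sum_lub_le_of_inj ha0 hk0 (fun i j => e.symm (i, j)) hinj
            (b := fun i j => |μ.toFun (B i ∩ C j)|)
            (fun i j => by rw [hDval i j]) hSrow n
    have hhlek : h ≤ k0 := by
      refine hhsum.2 ?_
      rintro y ⟨n, rfl⟩
      have hinj : Function.Injective fun p : ℕ × ℕ => e.symm (p.2, p.1) := by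
        intro p q hpq
        have h2 := e.symm.injective hpq
        cases p; cases q; simp at h2; exact Prod.ext_iff.2 ⟨h2.2, h2.1⟩
      calc ∑ j ∈ Finset.range n, |μ.toFun (C j)| ≤ ∑ j ∈ Finset.range n, Tcol j :=
            Finset.sum_le_sum fun j _ => hcolle j
        _ ≤ k0 := sum_lub_le_of_inj ha0 hk0 (fun j i => e.symm (i, j)) hinj
            (b := fun j i => |μ.toFun (B i ∩ C j)|)
            (fun j i => by rw [hDval i j]) hTcol n
    exact ⟨k0, ⟨D, hDm, hDd, hDu, hk0⟩, hglek, hhlek⟩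
  obtain ⟨u, hu⟩ := exists_isLUB_of_directed hne hdir
    (fun g hg => hub g hg) (fun g hg => pSums_nonneg hg)
  refine ⟨u, ?_, hu⟩
  intro B hBm hBd hBu n
  obtain ⟨g, hg⟩ := sum_exists μ hBm hBd
  exact le_trans (hg.1 ⟨n, rfl⟩) (hu.1 ⟨B, hBm, hBd, hBu, hg⟩)

end TVConstruction

/-- If `μ : 𝒜 → L⁰(m)` is an `L⁰`-valued measure of bounded variation
(its total variation on `Ω` exists in `L⁰(m)`), then the total variation `|μ|` is a
non-negative `L⁰`-valued measure. -/
theorem statement2 {X : Type*} [MeasurableSpace X] (m : Measure X) [IsProbabilityMeasure m]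
    {Ω : Type*} [MeasurableSpace Ω] (μ : L0Measure m Ω)
    (t : X →ₘ[m] ℝ) (ht : HasTV m μ.toFun univ t) :
    ∃ ν : L0Measure m Ω, (∀ A : Set Ω, 0 ≤ ν.toFun A) ∧
      ∀ A : Set Ω, MeasurableSet A → HasTV m μ.toFun A (ν.toFun A) := by
  classical
  set νf : Set Ω → (X →ₘ[m] ℝ) := fun A =>
    if h : ∃ u, HasTV m μ.toFun A u then h.choose else 0 with hνdef
  have hν : ∀ A : Set Ω, MeasurableSet A → HasTV m μ.toFun A (νf A) := by
    intro A hA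
    have h : ∃ u, HasTV m μ.toFun A u := exists_hasTV μ ht hA
    simp only [hνdef, dif_pos h]
    exact h.choose_spec
  have hν_eq : ∀ (A : Set Ω) (u : X →ₘ[m] ℝ), HasTV m μ.toFun A u → νf A = u := by
    intro A u huu
    have h : ∃ u, HasTV m μ.toFun A u := ⟨u, huu⟩
    simp only [hνdef, dif_pos h]
    exact h.choose_spec.2.unique huu.2
  have hν_nonneg : ∀ A : Set Ω, 0 ≤ νf A := by
    intro A
    by_cases h : ∃ u, HasTV m μ.toFun A u
    · simp only [hνdef, dif_pos h]
      have hs := h.choose_spec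
      rcases (partitionSums m μ.toFun A).eq_empty_or_nonempty with he | ⟨g, hg⟩
      · exfalso
        have h1 : h.choose ≤ h.choose - 1 := hs.2.2 (by
          rw [he]
          exact fun x hx => absurd hx (Set.notMem_empty x))
        have h2 : (1 : X →ₘ[m] ℝ) ≤ 0 := by
          have h3 : h.choose + 1 ≤ h.choose := le_sub_iff_add_le.1 h1
          exact (add_le_iff_nonpos_right _).1 h3
        have h4 : ∀ᵐ x ∂m, False := by
          filter_upwards [MeasureTheory.AEEqFun.coeFn_le.2 h2,
            MeasureTheory.AEEqFun.coeFn_one (β := ℝ) (μ := m),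
            MeasureTheory.AEEqFun.coeFn_zero (β := ℝ) (μ := m)] with x e1 e2 e3
          rw [e2, e3] at e1
          simp only [Pi.one_apply, Pi.zero_apply] at e1
          linarith
        obtain ⟨_, hx⟩ := h4.exists
        exact hx
      · exact le_trans (pSums_nonneg hg) (hs.2.1 hg)
    · simp only [hνdef, dif_neg h]
      exact le_rfl
  -- superadditivity : partial sums are below the variation of the union
  have hDsum : ∀ (A : ℕ → Set Ω), (∀ n, MeasurableSet (A n)) → Pairwise (Disjoint on A) →
      ∀ n, ∑ i ∈ Finset.range n, νf (A i) ≤ νf (⋃ i, A i) := by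
    intro A hAm hAd n
    set U : Set Ω := ⋃ i, A i with hUdef
    have hU : MeasurableSet U := MeasurableSet.iUnion hAm
    set W : Set Ω := ⋃ j, ⋃ (_ : j < n), A j with hWdef
    have hWm : MeasurableSet W := MeasurableSet.iUnion fun j => MeasurableSet.iUnion fun _ => hAm j
    set A' : ℕ → Set Ω := fun i => if i < n then A i else if i = n then U \ W else ∅ with hA'def
    have hA'lt : ∀ i, i < n → A' i = A i := fun i hi => if_pos hi
    have hA'n : A' n = U \ W := by rw [hA'def]; simp
    have hA'gt : ∀ i, n < i → A' i = ∅ := fun i hi => by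
      rw [hA'def]; simp only []; rw [if_neg (by omega), if_neg (by omega)]
    have hA'm : ∀ i, MeasurableSet (A' i) := by
      intro i
      rcases lt_trichotomy i n with hi | rfl | hi
      · rw [hA'lt i hi]; exact hAm i
      · rw [hA'n]; exact hU.diff hWm
      · rw [hA'gt i hi]; exact MeasurableSet.empty
    have hA'sub : ∀ i, A' i ⊆ U := by
      intro i
      rcases lt_trichotomy i n with hi | rfl | hi
      · rw [hA'lt i hi]; exact subset_iUnion A i
      · rw [hA'n]; exact diff_subset
      · rw [hA'gt i hi]; exact empty_subset _
    have hd2 : ∀ i j, i < n → i ≠ j → Disjoint (A' i) (A' j) := by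
      intro i j hi hij
      rw [hA'lt i hi]
      rcases lt_trichotomy j n with hj | heq | hj
      · rw [hA'lt j hj]; exact hAd hij
      · rw [heq, hA'n]
        refine Set.disjoint_sdiff_right.mono_left ?_
        show A i ⊆ ⋃ j, ⋃ (_ : j < n), A j
        exact subset_iUnion₂ (s := fun k (_ : k < n) => A k) i hi
      · rw [hA'gt j hj]; exact disjoint_bot_right
    have hA'd : Pairwise (Disjoint on A') := by
      intro i j hij
      rcases lt_trichotomy i n with hi | heq | hi
      · exact hd2 i j hi hij
      · rcases lt_trichotomy j n with hj | heq2 | hj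
        · exact (hd2 j i hj fun hh => hij hh.symm).symm
        · exact absurd (heq.trans heq2.symm) hij
        · show Disjoint (A' i) (A' j)
          rw [hA'gt j hj]; exact disjoint_bot_right
      · show Disjoint (A' i) (A' j)
        rw [hA'gt i hi]; exact disjoint_bot_left
    have hA'u : ⋃ i, A' i = U := by
      apply subset_antisymm
      · exact iUnion_subset hA'sub
      · intro x hx
        by_cases hx2 : x ∈ W
        · obtain ⟨k, hk, hxk⟩ := mem_iUnion₂.1 hx2
          exact mem_iUnion.2 ⟨k, by rw [hA'lt k hk]; exact hxk⟩
        · exact mem_iUnion.2 ⟨n, by rw [hA'n]; exact ⟨hx, hx2⟩⟩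
    have heq : ∑ i ∈ Finset.range n, νf (A i) = ∑ i ∈ Finset.range n, νf (A' i) :=
      Finset.sum_congr rfl fun i hi => by rw [hA'lt i (Finset.mem_range.1 hi)]
    rw [heq]
    refine sum_isLUB_le (Finset.range n) (s := fun i => partitionSums m μ.toFun (A' i))
      (fun i _ => (hν (A' i) (hA'm i)).2) ?_
    intro x hx
    have hchoice : ∀ i : ℕ, ∃ p : (ℕ → Set Ω) × (X →ₘ[m] ℝ),
        (∀ k, MeasurableSet (p.1 k)) ∧ Pairwise (Disjoint on p.1) ∧ (⋃ k, p.1 k) = A' i ∧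
        HasL0Sum m (fun k => |μ.toFun (p.1 k)|) p.2 ∧ (i ∈ Finset.range n → p.2 = x i) := by
      intro i
      by_cases hi : i ∈ Finset.range n
      · obtain ⟨B, h1, h2, h3, h4⟩ := hx i hi
        exact ⟨(B, x i), h1, h2, h3, h4, fun _ => rfl⟩
      · obtain ⟨g, B, h1, h2, h3, h4⟩ := exists_mem_pSums μ (hA'm i)
        exact ⟨(B, g), h1, h2, h3, h4, fun h => absurd h hi⟩
    choose P hP1 hP2 hP3 hP4 hP5 using hchoice
    set e : ℕ ≃ ℕ × ℕ := (Denumerable.eqv (ℕ × ℕ)).symm with hedef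
    set D : ℕ → Set Ω := fun k => (P (e k).1).1 (e k).2 with hDdef
    have hDm : ∀ k, MeasurableSet (D k) := fun k => hP1 _ _
    have hPsub : ∀ i k, (P i).1 k ⊆ A' i := fun i k => (hP3 i) ▸ subset_iUnion (P i).1 k
    have hDd : Pairwise (Disjoint on D) := by
      intro i j hij
      have hne' : e i ≠ e j := fun hh => hij (e.injective hh)
      by_cases h1 : (e i).1 = (e j).1
      · have h2 : (e i).2 ≠ (e j).2 := fun h2 => hne' (Prod.ext_iff.2 ⟨h1, h2⟩)
        show Disjoint (D i) (D j)
        rw [hDdef]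
        simp only []
        rw [h1]
        exact hP2 _ h2
      · exact (hA'd h1).mono (hPsub _ _) (hPsub _ _)
    have hDu : ⋃ k, D k = U := by
      apply subset_antisymm
      · exact iUnion_subset fun k => (hPsub _ _).trans (hA'sub _)
      · intro x2 hx2
        rw [← hA'u] at hx2
        obtain ⟨i, hi⟩ := mem_iUnion.1 hx2
        rw [← hP3 i] at hi
        obtain ⟨j, hj⟩ := mem_iUnion.1 hi
        refine mem_iUnion.2 ⟨e.symm (i, j), ?_⟩
        show x2 ∈ (P (e (e.symm (i, j))).1).1 (e (e.symm (i, j))).2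
        rw [Equiv.apply_symm_apply]
        exact hj
    obtain ⟨k0, hk0⟩ := sum_exists μ hDm hDd
    have hk0le : k0 ≤ νf U := (hν U hU).2.1 ⟨D, hDm, hDd, hDu, hk0⟩
    have hxeq : ∑ i ∈ Finset.range n, x i = ∑ i ∈ Finset.range n, (P i).2 :=
      Finset.sum_congr rfl fun i hi => (hP5 i hi).symm
    rw [hxeq]
    refine le_trans ?_ hk0le
    have hinj : Function.Injective fun p : ℕ × ℕ => e.symm (p.1, p.2) := by
      intro p q hpq
      have h2 := e.symm.injective hpq
      cases p; cases q; simpa using h2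
    have hDval : ∀ i j, (P i).1 j = D (e.symm (i, j)) := by
      intro i j
      show _ = (P (e (e.symm (i, j))).1).1 (e (e.symm (i, j))).2
      rw [Equiv.apply_symm_apply]
    exact sum_lub_le_of_inj (fun k => abs_nonneg0 _) hk0 (fun i j => e.symm (i, j)) hinj
      (b := fun i j => |μ.toFun ((P i).1 j)|) (fun i j => by
        show |μ.toFun ((P i).1 j)| = |μ.toFun (D (e.symm (i, j)))|
        rw [hDval i j]) hP4 n
  -- the key LUB identity
  have hkey : ∀ (A : ℕ → Set Ω), (∀ n, MeasurableSet (A n)) → Pairwise (Disjoint on A) →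
      IsLUB (Set.range fun n => ∑ i ∈ Finset.range n, νf (A i)) (νf (⋃ i, A i)) := by
    intro A hAm hAd
    constructor
    · rintro y ⟨n, rfl⟩; exact hDsum A hAm hAd n
    · intro u hu2
      refine ((hν _ (MeasurableSet.iUnion hAm)).2).2 ?_
      rintro g ⟨B, hBm, hBd, hBu, hgsum⟩
      refine hgsum.2 ?_
      rintro y ⟨J, rfl⟩
      have hm2 : ∀ j i, MeasurableSet (B j ∩ A i) := fun j i => (hBm j).inter (hAm i)
      have hd2 : ∀ j, Pairwise (Disjoint on fun i => B j ∩ A i) := fun j i i' hii =>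
        (hAd hii).mono inter_subset_right inter_subset_right
      choose Sr hSr using fun j => sum_exists μ (hm2 j) (hd2 j)
      have hBsub : ∀ j, B j ⊆ ⋃ i, A i := fun j => hBu ▸ subset_iUnion B j
      have hrowle : ∀ j, |μ.toFun (B j)| ≤ Sr j := by
        intro j
        have hu3 : ⋃ i, B j ∩ A i = B j := by
          rw [← Set.inter_iUnion]
          exact inter_eq_self_of_subset_left (hBsub j)
        have h5 := abs_union_le μ (hm2 j) (hd2 j) (hSr j)
        rwa [hu3] at h5
      calc ∑ j ∈ Finset.range J, |μ.toFun (B j)| ≤ ∑ j ∈ Finset.range J, Sr j :=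
            Finset.sum_le_sum fun j _ => hrowle j
        _ ≤ u := ?_
      have hlub2 := isLUB_range_sum (Finset.range J)
        (p := fun j p => ∑ i ∈ Finset.range p, |μ.toFun (B j ∩ A i)|) (S := Sr)
        (fun j _ => monotone_partial_sums fun i => abs_nonneg0 _) (fun j _ => hSr j)
      refine hlub2.2 ?_
      rintro y ⟨p, rfl⟩
      show ∑ j ∈ Finset.range J, ∑ i ∈ Finset.range p, |μ.toFun (B j ∩ A i)| ≤ u
      rw [Finset.sum_comm]
      calc ∑ i ∈ Finset.range p, ∑ j ∈ Finset.range J, |μ.toFun (B j ∩ A i)|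
          ≤ ∑ i ∈ Finset.range p, νf (A i) := Finset.sum_le_sum fun i _ => by
            have hu4 : ⋃ j, B j ∩ A i = A i := by
              rw [← Set.iUnion_inter, hBu]
              exact inter_eq_self_of_subset_right (subset_iUnion A i)
            exact (hν (A i) (hAm i)).1 (fun j => B j ∩ A i) (fun j => hm2 j i)
              (fun j j' hjj => (hBd hjj).mono inter_subset_left inter_subset_left) hu4 J
        _ ≤ u := hu2 ⟨p, rfl⟩
  -- additivity (net convergence)
  have hadd : ∀ (A : ℕ → Set Ω), (∀ n, MeasurableSet (A n)) → Pairwise (Disjoint on A) →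
      Tendsto (fun F : Finset ℕ => dL0 m (∑ i ∈ F, νf (A i)) (νf (⋃ n, A n))) atTop (𝓝 0) := by
    intro A hAm hAd
    have hkey' := hkey A hAm hAd
    have h0i : ∀ i, 0 ≤ νf (A i) := fun i => hν_nonneg (A i)
    have hmono := monotone_partial_sums h0i
    have hseq := tendsto_dL0_of_isLUB (fun n => hmono (Nat.le_succ n)) hkey'
    rw [Metric.tendsto_nhds] at hseq ⊢
    intro ε hε
    obtain ⟨N, hN⟩ := Filter.eventually_atTop.1 (hseq ε hε)
    rw [Filter.eventually_atTop]
    refine ⟨Finset.range N, fun F hF => ?_⟩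
    have h1 : ∑ i ∈ Finset.range N, νf (A i) ≤ ∑ i ∈ F, νf (A i) :=
      Finset.sum_le_sum_of_subset_of_nonneg hF fun i _ _ => h0i i
    have h2 : ∑ i ∈ F, νf (A i) ≤ νf (⋃ n, A n) := sum_finset_le_of_isLUB h0i hkey' F
    have h3 : dL0 m (∑ i ∈ F, νf (A i)) (νf (⋃ n, A n))
        ≤ dL0 m (∑ i ∈ Finset.range N, νf (A i)) (νf (⋃ n, A n)) := dL0_anti h1 h2
    have h4 := hN N le_rfl
    rw [Real.dist_eq, sub_zero, abs_of_nonneg (dL0_nonneg _ _)] at h4 ⊢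
    exact lt_of_le_of_lt h3 h4
  -- value on the empty set
  have hempty : νf ∅ = 0 := by
    refine hν_eq ∅ 0 ⟨?_, ?_, ?_⟩
    · intro B hBm hBd hBu n
      have hBe : ∀ i, |μ.toFun (B i)| = 0 := by
        intro i
        have : B i = ∅ := eq_empty_of_subset_empty (hBu ▸ subset_iUnion B i)
        rw [this, μ.empty', abs_of_nonneg0 le_rfl]
      exact le_of_eq (Finset.sum_eq_zero fun i _ => hBe i)
    · rintro g ⟨B, hBm, hBd, hBu, hgsum⟩
      have hBe : ∀ i, |μ.toFun (B i)| = 0 := by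
        intro i
        have : B i = ∅ := eq_empty_of_subset_empty (hBu ▸ subset_iUnion B i)
        rw [this, μ.empty', abs_of_nonneg0 le_rfl]
      have hfun : (fun n => ∑ i ∈ Finset.range n, |μ.toFun (B i)|)
          = fun _ : ℕ => (0 : X →ₘ[m] ℝ) :=
        funext fun n => Finset.sum_eq_zero fun i _ => hBe i
      have hg2 : IsLUB (Set.range fun _ : ℕ => (0 : X →ₘ[m] ℝ)) g := by
        rw [← hfun]; exact hgsum
      exact le_of_eq (hg2.unique isLUB_range_const)
    · intro u hu2
      refine hu2 ⟨fun _ => ∅, fun _ => MeasurableSet.empty, ?_, by simp, ?_⟩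
      · intro i j _; exact disjoint_bot_left
      · have hfun : (fun n => ∑ i ∈ Finset.range n, |μ.toFun (∅ : Set Ω)|)
            = fun _ : ℕ => (0 : X →ₘ[m] ℝ) :=
          funext fun n => Finset.sum_eq_zero fun i _ => by
            rw [μ.empty', abs_of_nonneg0 le_rfl]
        show IsLUB _ (0 : X →ₘ[m] ℝ)
        rw [hfun]
        exact isLUB_range_const
  refine ⟨⟨νf, hempty, ?_, hadd⟩, hν_nonneg, hν⟩
  intro A hAm hAd
  refine ⟨νf (⋃ i, A i), ?_⟩
  rintro y ⟨n, rfl⟩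
  have habs : ∑ i ∈ Finset.range n, |νf (A i)| = ∑ i ∈ Finset.range n, νf (A i) :=
    Finset.sum_congr rfl fun i _ => abs_of_nonneg0 (hν_nonneg (A i))
  show ∑ i ∈ Finset.range n, |νf (A i)| ≤ νf (⋃ i, A i)
  rw [habs]
  exact hDsum A hAm hAd n

end RNMPaper
end
end

section
/- Let (Ω, τ) be a compact Hausdorff space and μ a non-negative Radon L^0-valued measure on Ω. If {U_i : i ∈ I} is a directed family of open sets (for every i, j there is k with U_i ∪ U_j ⊆ U_k), then μ(⋃_{i∈I} U_i) = ⋁_{i∈I} μ(U_i) in L^0(m). -/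
/-! For nonnegative `μ` the total variation `|μ|` agrees with `μ` on Borel sets: the partial sums
over a partition of `A` are values of `μ` on subsets of `A`, and the trivial partition gives the
reverse inequality. Inner regularity of `|μ|` then says that `μ (⋃ i, U i)` is the supremum of
`μ K` over compact `K ⊆ ⋃ i, U i`, and each such `K`, being covered by finitely many members of
a directed family of open sets, lies in a single `U i`. -/

open Filter Set Topology Function
open MeasureTheory (Measure IsProbabilityMeasure)

noncomputable section

namespace RNMPaper

variable {X : Type*} [MeasurableSpace X]

variable {Ω : Type*}

variable {Ωt : Type*} [TopologicalSpace Ωt] [MeasurableSpace Ωt]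

/-- Inner regularity of the total variation on open sets by compact sets:
`|μ|(U) = ⋁ {|μ|(K) : K compact, K ⊆ U}` for every open `U`. -/
def InnerRegularOnOpens (m : Measure X) (μ : BVMeasure m Ωt) : Prop :=
  ∀ U : Set Ωt, IsOpen U →
    IsLUB {g | ∃ K : Set Ωt, IsCompact K ∧ K ⊆ U ∧ g = μ.tv K} (μ.tv U)

/-- Outer regularity of the total variation on Borel sets by open sets:
`|μ|(B) = ⋀ {|μ|(U) : U open, B ⊆ U}` for every Borel `B`. -/
def OuterRegularBorel (m : Measure X) (μ : BVMeasure m Ωt) : Prop :=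
  ∀ B : Set Ωt, MeasurableSet B →
    IsGLB {g | ∃ U : Set Ωt, IsOpen U ∧ B ⊆ U ∧ g = μ.tv U} (μ.tv B)

/-- Inner regularity of the total variation on all Borel sets by compact sets. -/
def InnerRegularBorel (m : Measure X) (μ : BVMeasure m Ωt) : Prop :=
  ∀ B : Set Ωt, MeasurableSet B →
    IsLUB {g | ∃ K : Set Ωt, IsCompact K ∧ K ⊆ B ∧ g = μ.tv K} (μ.tv B)

/-- A Borel `L⁰`-valued measure of bounded variation is Radon if its total variation is
inner regular on open sets by compact sets and outer regular on Borel sets by open sets. -/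
def IsRadonL0 (m : Measure X) (μ : BVMeasure m Ωt) : Prop :=
  InnerRegularOnOpens m μ ∧ OuterRegularBorel m μ

open MeasureTheory

section L0

variable {m : Measure X}

instance : AddLeftMono (X →ₘ[m] ℝ) := ⟨by
  intro a b c h
  rw [← AEEqFun.coeFn_le] at h ⊢
  filter_upwards [h, AEEqFun.coeFn_add a b, AEEqFun.coeFn_add a c] with x h1 h2 h3
  rw [h2, h3]
  exact add_le_add_right h1 _⟩

theorem eq_of_dL0_eq_zero [IsFiniteMeasure m] {f g : X →ₘ[m] ℝ} (h : dL0 m f g = 0) : f = g := by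
  have hnonneg : 0 ≤ᵐ[m] fun x => min |f x - g x| 1 :=
    ae_of_all _ fun x => le_min (abs_nonneg _) zero_le_one
  have hint : Integrable (fun x => min |f x - g x| 1) m := by
    refine (integrable_const (1 : ℝ)).mono' ?_ (ae_of_all _ fun x => ?_)
    · simp only [← Real.norm_eq_abs]
      exact ((f.aestronglyMeasurable.sub g.aestronglyMeasurable).norm).inf
        aestronglyMeasurable_const
    · rw [Real.norm_eq_abs, abs_of_nonneg (le_min (abs_nonneg _) zero_le_one)]
      exact min_le_right _ _
  have h0 := (integral_eq_zero_iff_of_nonneg_ae hnonneg hint).mp h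
  refine AEEqFun.ext ?_
  filter_upwards [h0] with x hx
  have hx : min |f x - g x| 1 = 0 := hx
  rcases min_eq_iff.mp hx with ⟨hx, -⟩ | ⟨hx, -⟩
  · exact sub_eq_zero.mp (abs_eq_zero.mp hx)
  · exact absurd hx one_ne_zero

end L0

section FiniteBase

variable {m : Measure X} [IsFiniteMeasure m] [MeasurableSpace Ω]

namespace L0Measure

variable (μ : L0Measure m Ω)

theorem apply_iUnion_of_eq_empty {A : ℕ → Set Ω} (hA : ∀ n, MeasurableSet (A n))
    (hd : Pairwise (Disjoint on A)) {N : ℕ} (hN : ∀ n ≥ N, A n = ∅) :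
    μ.toFun (⋃ n, A n) = ∑ i ∈ Finset.range N, μ.toFun (A i) := by
  have hsum : ∀ᶠ F in atTop, ∑ i ∈ F, μ.toFun (A i) = ∑ i ∈ Finset.range N, μ.toFun (A i) := by
    filter_upwards [eventually_ge_atTop (Finset.range N)] with F hF
    refine (Finset.sum_subset hF fun n _ hn => ?_).symm
    rw [hN n (by simpa using hn), μ.empty']
  have h := (μ.additive' A hA hd).congr' (hsum.mono fun F hF => by rw [hF])
  exact (eq_of_dL0_eq_zero (tendsto_nhds_unique tendsto_const_nhds h)).symm

theorem apply_union {A B : Set Ω} (hA : MeasurableSet A) (hB : MeasurableSet B)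
    (hAB : Disjoint A B) : μ.toFun (A ∪ B) = μ.toFun A + μ.toFun B := by
  let C : ℕ → Set Ω := fun | 0 => A | 1 => B | _ + 2 => ∅
  have hC : (⋃ n, C n) = A ∪ B := by
    refine subset_antisymm (iUnion_subset fun n => ?_)
      (union_subset (subset_iUnion C 0) (subset_iUnion C 1))
    rcases n with _ | _ | n
    exacts [subset_union_left, subset_union_right, empty_subset _]
  have hCmeas : ∀ n, MeasurableSet (C n) := by
    rintro (_ | _ | n)
    exacts [hA, hB, .empty]
  have hCdisj : Pairwise (Disjoint on C) := by
    rintro (_ | _ | i) (_ | _ | j) hij <;> simp_all [onFun, C, hAB.symm]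
  rw [← hC, μ.apply_iUnion_of_eq_empty hCmeas hCdisj (N := 2) fun n hn => ?_]
  · simp [Finset.sum_range_succ, C]
  · obtain ⟨n, rfl⟩ := Nat.exists_eq_add_of_le' hn
    rfl

theorem apply_biUnion_range {B : ℕ → Set Ω} (hB : ∀ n, MeasurableSet (B n))
    (hd : Pairwise (Disjoint on B)) (n : ℕ) :
    μ.toFun (⋃ i ∈ Finset.range n, B i) = ∑ i ∈ Finset.range n, μ.toFun (B i) := by
  induction n with
  | zero => simp [μ.empty']
  | succ n ih =>
    have hdisj : Disjoint (⋃ i ∈ Finset.range n, B i) (B n) :=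
      disjoint_iUnion₂_left.mpr fun i hi => hd (Finset.mem_range.mp hi).ne
    rw [Finset.sum_range_succ, ← ih, Finset.range_add_one, Finset.set_biUnion_insert, union_comm,
      μ.apply_union (Finset.measurableSet_biUnion _ fun i _ => hB i) (hB n) hdisj]

theorem mono (hμ : ∀ A, MeasurableSet A → 0 ≤ μ.toFun A) {A B : Set Ω} (hA : MeasurableSet A)
    (hB : MeasurableSet B) (hAB : A ⊆ B) : μ.toFun A ≤ μ.toFun B :=
  calc μ.toFun A ≤ μ.toFun A + μ.toFun (B \ A) := le_add_of_nonneg_right (hμ _ (hB.diff hA))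
    _ = μ.toFun B := by
      rw [← μ.apply_union hA (hB.diff hA) disjoint_sdiff_right, union_sdiff_cancel hAB]

end L0Measure

theorem BVMeasure.tv_eq_apply (μ : BVMeasure m Ω) (hμ : ∀ A, MeasurableSet A → 0 ≤ μ.toFun A)
    {A : Set Ω} (hA : MeasurableSet A) : μ.tv A = μ.toFun A := by
  obtain ⟨hle, hlub⟩ := μ.htv A hA
  refine le_antisymm (hlub.2 ?_) ?_
  · rintro g ⟨B, hBmeas, hBdisj, rfl, hg⟩
    refine hg.2 (forall_mem_range.mpr fun n => ?_)
    calc ∑ i ∈ Finset.range n, |μ.toFun (B i)| = ∑ i ∈ Finset.range n, μ.toFun (B i) :=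
          Finset.sum_congr rfl fun i _ => abs_of_nonneg (hμ _ (hBmeas i))
      _ = μ.toFun (⋃ i ∈ Finset.range n, B i) := (μ.apply_biUnion_range hBmeas hBdisj n).symm
      _ ≤ μ.toFun (⋃ i, B i) :=
          μ.mono hμ (Finset.measurableSet_biUnion _ fun i _ => hBmeas i) hA
            (iUnion₂_subset fun i _ => subset_iUnion B i)
  · let D : ℕ → Set Ω := fun | 0 => A | _ + 1 => ∅
    have hDmeas : ∀ n, MeasurableSet (D n) := by
      rintro (_ | n)
      exacts [hA, .empty]
    have hDdisj : Pairwise (Disjoint on D) := by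
      rintro (_ | i) (_ | j) hij <;> simp_all [onFun, D]
    have hD : (⋃ n, D n) = A :=
      subset_antisymm (iUnion_subset fun n => by rcases n with _ | n <;> simp [D])
        (subset_iUnion D 0)
    exact (le_abs_self _).trans (by simpa [D] using hle D hDmeas hDdisj hD 1)

end FiniteBase

theorem isLUB_apply_iUnion_of_directed {α : Type*} [Preorder α] [TopologicalSpace Ω] [T2Space Ω]
    [MeasurableSpace Ω] [OpensMeasurableSpace Ω] {ν : Set Ω → α}
    (hmono : ∀ ⦃A B⦄, MeasurableSet A → MeasurableSet B → A ⊆ B → ν A ≤ ν B)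
    (hreg : ∀ V, IsOpen V → IsLUB {g | ∃ K, IsCompact K ∧ K ⊆ V ∧ g = ν K} (ν V))
    {I : Type*} [Nonempty I] {U : I → Set Ω} (hopen : ∀ i, IsOpen (U i))
    (hdir : Directed (· ⊆ ·) U) :
    IsLUB (range fun i => ν (U i)) (ν (⋃ i, U i)) := by
  have hV := isOpen_iUnion hopen
  refine ⟨forall_mem_range.mpr fun i =>
    hmono (hopen i).measurableSet hV.measurableSet (subset_iUnion U i), fun b hb => ?_⟩
  refine (hreg _ hV).2 ?_
  rintro _ ⟨K, hK, hKV, rfl⟩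
  obtain ⟨i, hKi⟩ := hK.elim_directed_cover U hopen hKV hdir
  exact (hmono hK.isClosed.measurableSet (hopen i).measurableSet hKi).trans
    (hb (mem_range_self i))

theorem statement11_general {X : Type*} [MeasurableSpace X] (m : Measure X) [IsProbabilityMeasure m]
    {Ω : Type*} [TopologicalSpace Ω] [T2Space Ω]
    [MeasurableSpace Ω] [BorelSpace Ω] (μ : BVMeasure m Ω)
    (hnonneg : ∀ A : Set Ω, MeasurableSet A → 0 ≤ μ.toFun A)
    (hRadon : IsRadonL0 m μ)
    {I : Type*} [Nonempty I] (U : I → Set Ω) (hopen : ∀ i, IsOpen (U i))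
    (hdir : ∀ i j, ∃ k, U i ∪ U j ⊆ U k) :
    IsLUB (Set.range fun i => μ.toFun (U i)) (μ.toFun (⋃ i, U i)) := by
  have htv {A} (hA : MeasurableSet A) := μ.tv_eq_apply hnonneg hA
  have hreg (V : Set Ω) (hV : IsOpen V) :
      IsLUB {g | ∃ K, IsCompact K ∧ K ⊆ V ∧ g = μ.toFun K} (μ.toFun V) := by
    rw [← htv hV.measurableSet]
    convert hRadon.1 V hV using 3 with g
    refine exists_congr fun K => and_congr_right fun hK => ?_
    rw [htv hK.isClosed.measurableSet]
  have hdir' : Directed (· ⊆ ·) U := fun i j =>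
    (hdir i j).imp fun k hk => ⟨subset_union_left.trans hk, subset_union_right.trans hk⟩
  exact isLUB_apply_iUnion_of_directed (fun _ _ => μ.mono hnonneg) hreg hopen hdir'

/-- **τ-additivity.** Let `Ω` be a compact Hausdorff space and `μ` a
non-negative Radon `L⁰`-valued measure on `Ω`.  For every directed family `{U i}` of open
sets, `μ (⋃ i, U i) = ⋁ᵢ μ (U i)` in `L⁰(m)`. -/
theorem statement11 {X : Type*} [MeasurableSpace X] (m : Measure X) [IsProbabilityMeasure m]
    {Ω : Type*} [TopologicalSpace Ω] [CompactSpace Ω] [T2Space Ω]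
    [MeasurableSpace Ω] [BorelSpace Ω] (μ : BVMeasure m Ω)
    (hnonneg : ∀ A : Set Ω, MeasurableSet A → 0 ≤ μ.toFun A)
    (hRadon : IsRadonL0 m μ)
    {I : Type*} [Nonempty I] (U : I → Set Ω) (hopen : ∀ i, IsOpen (U i))
    (hdir : ∀ i j, ∃ k, U i ∪ U j ⊆ U k) :
    IsLUB (Set.range fun i => μ.toFun (U i)) (μ.toFun (⋃ i, U i)) :=
  statement11_general m μ hnonneg hRadon U hopen hdir

end RNMPaper
end
end
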